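/- Suppose S ⊆ V is a union of connected components of G, i.e., whenever u ∈ S and v is reachable from u in G, then v ∈ S. Let x, y : V → ℝ have support contained in S, and let u : ℝ → (V → ℝ) be a twice differentiable function satisfying the wave equation u″(t) = −L u(t) for all t, with u(0) = x and u′(0) = y. Then for every t ∈ ℝ and every vertex v ∉ S, u(t)(v) = 0. -/

import Mathlib

/-!
Restricting a solution to the complement of `S` (multiplying by its indicator) commutes with
the Laplacian, because no edge joins `S` to its complement. So the restriction is again a
solution of the wave equation, now with zero initial data, and uniqueness for linear ODEs
forces it to vanish.
-/

open Set Matrix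

theorem HasDerivAt.indicator {𝕜 ι F : Type*} [NontriviallyNormedField 𝕜] [Fintype ι]
    [NormedAddCommGroup F] [NormedSpace 𝕜 F] {f : 𝕜 → ι → F} {f' : ι → F} {t : 𝕜}
    (hf : HasDerivAt f f' t) (T : Set ι) :
    HasDerivAt (fun s => T.indicator (f s)) (T.indicator f') t := by
  rw [hasDerivAt_pi] at hf ⊢
  intro i
  by_cases hi : i ∈ T
  · simpa only [indicator_of_mem hi] using hf i
  · simpa only [indicator_of_notMem hi] using hasDerivAt_const t (0 : F)

theorem ODE_second_order_linear_eq_zero {E : Type*} [NormedAddCommGroup E]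
    [NormedSpace ℝ E] (A : E →L[ℝ] E) {w w' : ℝ → E}
    (hw : ∀ t, HasDerivAt w (w' t) t) (hw' : ∀ t, HasDerivAt w' (A (w t)) t)
    (h₀ : w 0 = 0) (h₀' : w' 0 = 0) : w = 0 := by
  -- first-order reduction: `(w, w')` solves `X' = F X` with `F (a, b) = (b, A a)`
  let F : E × E →L[ℝ] E × E := (ContinuousLinearMap.snd ℝ E E).prod (A ∘L .fst ℝ E E)
  have hsol : (fun t => (w t, w' t)) = fun _ => 0 :=
    ODE_solution_unique_univ (v := fun _ => F) (s := fun _ => univ) (t₀ := 0)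
      (fun _ => F.lipschitz.lipschitzOnWith)
      (fun t => ⟨(hw t).prodMk (hw' t), trivial⟩)
      (fun t => ⟨by simpa using hasDerivAt_const t (0 : E × E), trivial⟩)
      (by simp [h₀, h₀'])
  funext t
  exact congrArg Prod.fst (congrFun hsol t)

namespace SimpleGraph

theorem lapMatrix_mulVec_indicator {V R : Type*} [Fintype V] [DecidableEq V] [NonAssocRing R]
    (G : SimpleGraph V) [DecidableRel G.Adj] {T : Set V}
    (hT : ∀ v w, G.Adj v w → v ∈ T → w ∈ T) (z : V → R) :
    G.lapMatrix R *ᵥ T.indicator z = T.indicator (G.lapMatrix R *ᵥ z) := by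
  funext v
  rw [lapMatrix_mulVec_apply]
  by_cases hv : v ∈ T
  · have hnbr : ∀ w ∈ G.neighborFinset v, T.indicator z w = z w := fun w hw =>
      indicator_of_mem (hT v w ((G.mem_neighborFinset v w).1 hw) hv) z
    rw [Finset.sum_congr rfl hnbr, indicator_of_mem hv, indicator_of_mem hv,
      lapMatrix_mulVec_apply]
  · have hnbr : ∀ w ∈ G.neighborFinset v, T.indicator z w = 0 := fun w hw =>
      indicator_of_notMem (fun hw' => hv (hT w v ((G.mem_neighborFinset v w).1 hw).symm hw')) z
    rw [Finset.sum_eq_zero hnbr, indicator_of_notMem hv, indicator_of_notMem hv]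
    simp

end SimpleGraph

/-- if `S` is a union of connected components of `G`, the initial data
`x`, `y` are supported in `S`, and `u` is a twice differentiable solution of the wave
equation `u''(t) = -L u(t)` with `u(0) = x`, `u'(0) = y`, then `u(t)` vanishes outside
of `S` for all `t`, where `L = D - A` is the graph Laplacian. -/
theorem wave_solution_supported_on_connected_components
    (V : Type*) [Fintype V] [DecidableEq V]
    (G : SimpleGraph V) [DecidableRel G.Adj]
    (L : Matrix V V ℝ) (hLdef : L = G.degMatrix ℝ - G.adjMatrix ℝ)
    (S : Set V) (hS : ∀ u ∈ S, ∀ v : V, G.Reachable u v → v ∈ S)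
    (x y : V → ℝ) (hx : ∀ v : V, v ∉ S → x v = 0) (hy : ∀ v : V, v ∉ S → y v = 0)
    (u u' : ℝ → V → ℝ)
    (hu' : ∀ t : ℝ, HasDerivAt u (u' t) t)
    (hu'' : ∀ t : ℝ, HasDerivAt u' (-(L.mulVec (u t))) t)
    (hu0 : u 0 = x) (hu'0 : u' 0 = y) :
    ∀ t : ℝ, ∀ v : V, v ∉ S → u t v = 0 := by
  have hSc : ∀ v w, G.Adj v w → v ∈ Sᶜ → w ∈ Sᶜ := fun v w hvw hv hw =>
    hv (hS w hw v hvw.symm.reachable)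
  have hL : ∀ z, L *ᵥ Sᶜ.indicator z = Sᶜ.indicator (L *ᵥ z) :=
    hLdef ▸ G.lapMatrix_mulVec_indicator hSc
  have hout : ∀ z : V → ℝ, (∀ v, v ∉ S → z v = 0) → Sᶜ.indicator z = 0 := fun z hz =>
    funext fun v => indicator_apply_eq_zero.2 (hz v)
  have hrestrict := ODE_second_order_linear_eq_zero (-(mulVecLin L).toContinuousLinearMap)
    (w := fun t => Sᶜ.indicator (u t)) (w' := fun t => Sᶜ.indicator (u' t))
    (fun t => (hu' t).indicator Sᶜ)
    (fun t => by simpa [hL, indicator_neg'] using (hu'' t).indicator Sᶜ)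
    (by rw [hu0, hout x hx]) (by rw [hu'0, hout y hy])
  intro t v hv
  simpa [hv] using congrFun (congrFun hrestrict t) v
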